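/- arXiv:1312.3063 — 2 statements merged into one kernel-verified Lean document; each statement's English description precedes it below -/
import Mathlib

section
/- For d ≠ 0 and the matrix A = [[0,0,1,0],[0,0,0,1],[0,d,d/2,-b],[-d,0,-b,-a]] over the rationals, one has A · M_F · A^{-1} = [[1,1,0,0],[0,1,0,0],[d,d,1,0],[0,-k,-1,1]], where M_F = [[1,1,1/2,1/6],[0,1,1,1/2],[0,0,1,1],[0,0,0,1]] and k = d/6 + 2b. -/
/-!
Since `det A = d²`, the matrix `A` is invertible, and the conjugation identity reduces to the
polynomial identity `A * M_F = M * A`, which is checked entry by entry.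
-/

open Matrix

/-- The monodromy matrix around `0` in the normalised Frobenius basis. -/
def MF : Matrix (Fin 4) (Fin 4) ℚ :=
  !![1, 1, 1/2, 1/6; 0, 1, 1, 1/2; 0, 0, 1, 1; 0, 0, 0, 1]

/-- The base change matrix `A`. -/
def Amat (a b d : ℚ) : Matrix (Fin 4) (Fin 4) ℚ :=
  !![0,0,1,0; 0,0,0,1; 0,d,d/2,-b; -d,0,-b,-a]

theorem Matrix.mul_mul_nonsing_inv_eq_of_mul_eq_mul {n α : Type*} [Fintype n] [DecidableEq n]
    [CommRing α] {A X Y : Matrix n n α} (hA : IsUnit A.det) (h : A * X = Y * A) :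
    A * X * A⁻¹ = Y := by
  rw [h, mul_nonsing_inv_cancel_right _ _ hA]

theorem det_Amat (a b d : ℚ) : (Amat a b d).det = d ^ 2 := by
  simp [Amat, det_succ_row_zero, Fin.sum_univ_succ, Fin.succAbove]
  ring

theorem Amat_mul_MF (a b d : ℚ) :
    Amat a b d * MF = !![1,1,0,0; 0,1,0,0; d,d,1,0; 0,-(d/6 + 2*b),-1,1] * Amat a b d := by
  ext i j
  fin_cases i <;> fin_cases j <;> simp [Amat, MF, mul_apply, Fin.sum_univ_four] <;> ring

/-- The conjugation identity `A M_F A⁻¹ = M`, where `k = d/6 + 2b`. -/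
theorem A_conj_MF (a b d : ℚ) (hd : d ≠ 0) :
    Amat a b d * MF * (Amat a b d)⁻¹ =
      !![1,1,0,0; 0,1,0,0; d,d,1,0; 0,-(d/6 + 2*b),-1,1] := by
  have hA : IsUnit (Amat a b d).det := by
    rw [det_Amat, isUnit_iff_ne_zero]
    exact pow_ne_zero 2 hd
  exact mul_mul_nonsing_inv_eq_of_mul_eq_mul hA (Amat_mul_MF a b d)
end

section
/- The fifteen nonzero vectors of (Z/2)^4 are partitioned into exactly six pentades (5-element sets of vectors pairwise pairing to 1 under the symplectic form), namely {a,d,g,m,o}, {a,e,f,l,n}, {b,h,k,n,o}, {b,i,j,l,m}, {c,d,e,i,k}, {c,f,g,h,j}, and each nonzero vector belongs to exactly two pentades. -/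
open Matrix

/-- The symplectic form `⟨u,v⟩ = u₁v₃ + u₂v₄ + u₃v₁ + u₄v₂` on `(ℤ/2)^4`. -/
def sform (u v : Fin 4 → ZMod 2) : ZMod 2 :=
  u 0 * v 2 + u 1 * v 3 + u 2 * v 0 + u 3 * v 1

/-- A pentade is a 5-element set of nonzero vectors of `(ℤ/2)^4` pairwise
pairing to `1`. -/
def IsPentade (P : Finset (Fin 4 → ZMod 2)) : Prop :=
  P.card = 5 ∧ (∀ v ∈ P, v ≠ 0) ∧ ∀ u ∈ P, ∀ v ∈ P, u ≠ v → sform u v = 1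

/-- The six pentades of the paper. -/
def pentades : Finset (Finset (Fin 4 → ZMod 2)) :=
  { {![0,0,0,1], ![0,1,0,0], ![0,1,1,1], ![1,1,0,1], ![1,1,1,1]},
    {![0,0,0,1], ![0,1,0,1], ![0,1,1,0], ![1,1,0,0], ![1,1,1,0]},
    {![0,0,1,0], ![1,0,0,0], ![1,0,1,1], ![1,1,1,0], ![1,1,1,1]},
    {![0,0,1,0], ![1,0,0,1], ![1,0,1,0], ![1,1,0,0], ![1,1,0,1]},
    {![0,0,1,1], ![0,1,0,0], ![0,1,0,1], ![1,0,0,1], ![1,0,1,1]},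
    {![0,0,1,1], ![0,1,1,0], ![0,1,1,1], ![1,0,0,0], ![1,0,1,0]} }

/-!
Call `u, v` adjacent when `sform u v = 1`. For adjacent `a, b` the common neighbours of `a` and `b`
form the coset `a + b + {a, b}ᗮ`; in it `a + b` is adjacent to nothing, while the other three
vectors are pairwise adjacent. Hence every edge, and a fortiori every four pairwise adjacent
vectors `a, b, c, d`, lie in exactly one pentade, whose remaining element is `a + b + c + d`.
Each nonzero `v` has eight neighbours (the complement of the hyperplane `vᗮ`), which the pentades
through `v` partition into sets of four, so `v` lies in exactly two pentades. Over `(ℤ/2)^4` all of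
this is a finite check.
-/

namespace Finset

variable {α : Type*} [DecidableEq α] {s : Finset α}

theorem card_eq_five : #s = 5 ↔ ∃ x y z w v, x ≠ y ∧ x ≠ z ∧ x ≠ w ∧ x ≠ v ∧ y ≠ z ∧ y ≠ w ∧
    y ≠ v ∧ z ≠ w ∧ z ≠ v ∧ w ≠ v ∧ s = {x, y, z, w, v} := by
  constructor
  · rw [card_eq_succ]
    grind [card_eq_four]
  · grind

end Finset

set_option synthInstance.maxSize 8192 in
theorem eq_add_of_pairwise_sform_eq_one : ∀ a b : Fin 4 → ZMod 2, sform a b = 1 →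
    ∀ c, sform a c = 1 → sform b c = 1 →
    ∀ d, sform a d = 1 → sform b d = 1 → sform c d = 1 →
    ∀ e, sform a e = 1 → sform b e = 1 → sform c e = 1 → sform d e = 1 →
    e = a + b + c + d := by
  decide +kernel

set_option synthInstance.maxSize 8192 in
theorem insert_add_mem_pentades : ∀ a b : Fin 4 → ZMod 2, sform a b = 1 →
    ∀ c, sform a c = 1 → sform b c = 1 →
    ∀ d, sform a d = 1 → sform b d = 1 → sform c d = 1 →
    ({a, b, c, d, a + b + c + d} : Finset (Fin 4 → ZMod 2)) ∈ pentades := by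
  decide +kernel

theorem isPentade_of_mem_pentades : ∀ P ∈ pentades, IsPentade P := by
  unfold IsPentade
  decide +kernel

theorem card_filter_mem_pentades : ∀ v : Fin 4 → ZMod 2, v ≠ 0 →
    (pentades.filter (fun P => v ∈ P)).card = 2 := by
  decide +kernel

theorem mem_pentades_of_isPentade {P : Finset (Fin 4 → ZMod 2)} (hP : IsPentade P) :
    P ∈ pentades := by
  obtain ⟨hcard, -, hpair⟩ := hP
  obtain ⟨a, b, c, d, e, hab, hac, had, hae, hbc, hbd, hbe, hcd, hce, hde, rfl⟩ :=
    Finset.card_eq_five.mp hcard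
  have he : e = a + b + c + d := by
    refine eq_add_of_pairwise_sform_eq_one a b ?_ c ?_ ?_ d ?_ ?_ ?_ e ?_ ?_ ?_ ?_ <;>
      exact hpair _ (by simp) _ (by simp) ‹_›
  rw [he]
  refine insert_add_mem_pentades a b ?_ c ?_ ?_ d ?_ ?_ ?_ <;>
    exact hpair _ (by simp) _ (by simp) ‹_›

/-- The pentades are exactly the six listed ones, and each nonzero vector
belongs to exactly two of them. -/
theorem pentades_classification :
    (∀ P : Finset (Fin 4 → ZMod 2), IsPentade P ↔ P ∈ pentades) ∧
    (∀ v : Fin 4 → ZMod 2, v ≠ 0 →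
      (pentades.filter (fun P => v ∈ P)).card = 2) :=
  ⟨fun _ => ⟨mem_pentades_of_isPentade, isPentade_of_mem_pentades _⟩, card_filter_mem_pentades⟩
end
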